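/- arXiv:2205.02016 — 3 statements merged into one kernel-verified Lean document; each statement's English description precedes it below -/
import Mathlib

section
/- Let $A$ be a ring, $\varpi \in A$, and let $N$ be a finite group acting on an $A$-algebra $B$ with invariants $A' = B^N$. Suppose the trace map $\mathrm{Tr} : B \to A'$, $\mathrm{Tr}(b) = \sum_{n \in N} n(b)$, is surjective up to $\varpi^\epsilon$ for every $\epsilon > 0$, meaning for each $\epsilon$ there exists $\alpha_\epsilon \in B$ with $\mathrm{Tr}(\alpha_\epsilon) = \varpi^\epsilon$. Then for every $\epsilon > 0$, the map $h_\epsilon : A' \to A'[N]\text{-module } B$ given by $x \mapsto \sum_{g \in N} x\, g(\alpha_\epsilon)$ composed with the trace equals multiplication by $\varpi^\epsilon$ on $A'$; consequently, multiplication by $\varpi^\epsilon$ on any cohomology group $H^i(N, B)$ for $i > 0$ factors through an induced (cohomologically trivial) module, hence $\varpi^\epsilon \cdot H^i(N, B) = 0$ for all $i > 0$ and all $\epsilon > 0$. -/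
open Finset

section AuxFin

variable {β : Type*} {n : ℕ}

lemma aux_snoc_comp_succ (g : Fin (n + 1) → β) (s : β) :
    (fun k : Fin (n + 1) => (Fin.snoc g s : Fin (n + 2) → β) k.succ)
      = Fin.snoc (fun k : Fin n => g k.succ) s := by
  funext k
  refine Fin.lastCases ?_ (fun k' => ?_) k
  · rw [Fin.succ_last, Fin.snoc_last, Fin.snoc_last]
  · rw [Fin.snoc_castSucc, Fin.succ_castSucc, Fin.snoc_castSucc]

lemma aux_snoc_zero (g : Fin (n + 1) → β) (s : β) :
    (Fin.snoc g s : Fin (n + 2) → β) 0 = g 0 := by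
  rw [show (0 : Fin (n + 2)) = Fin.castSucc 0 from rfl, Fin.snoc_castSucc]

lemma aux_contractNth_succ_comp (op : β → β → β) (j : Fin (n + 1)) (g : Fin (n + 2) → β) :
    (fun k : Fin n => Fin.contractNth j.succ op g k.succ)
      = Fin.contractNth j op fun k : Fin (n + 1) => g k.succ := by
  funext k
  rcases lt_trichotomy (k : ℕ) (j : ℕ) with h | h | h
  · rw [Fin.contractNth_apply_of_lt _ _ _ _ (by simpa using h),
      Fin.contractNth_apply_of_lt _ _ _ _ h, Fin.succ_castSucc]
  · rw [Fin.contractNth_apply_of_eq _ _ _ _ (by simpa using h),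
      Fin.contractNth_apply_of_eq _ _ _ _ h, Fin.succ_castSucc]
  · rw [Fin.contractNth_apply_of_gt _ _ _ _ (by simpa using h),
      Fin.contractNth_apply_of_gt _ _ _ _ h]

lemma aux_contractNth_last (op : β → β → β) (g : Fin (n + 1) → β) :
    Fin.contractNth (Fin.last n) op g = fun k : Fin n => g k.castSucc := by
  funext k
  rw [Fin.contractNth_apply_of_lt _ _ _ _ (by simpa using k.isLt)]

lemma aux_contractNth_castSucc_snoc (op : β → β → β) (j : Fin (n + 1)) (hj : (j : ℕ) < n)
    (g : Fin (n + 1) → β) (s : β) :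
    Fin.contractNth j.castSucc op (Fin.snoc g s) = Fin.snoc (Fin.contractNth j op g) s := by
  funext k
  refine Fin.lastCases ?_ (fun k' => ?_) k
  · rw [Fin.snoc_last, Fin.contractNth_apply_of_gt _ _ _ _ (by simpa using hj),
      Fin.succ_last, Fin.snoc_last]
  · rw [Fin.snoc_castSucc]
    rcases lt_trichotomy (k' : ℕ) (j : ℕ) with h | h | h
    · rw [Fin.contractNth_apply_of_lt _ _ _ _ (by simpa using h),
        Fin.contractNth_apply_of_lt _ _ _ _ h, Fin.snoc_castSucc]
    · rw [Fin.contractNth_apply_of_eq _ _ _ _ (by simpa using h),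
        Fin.contractNth_apply_of_eq _ _ _ _ h, Fin.snoc_castSucc,
        Fin.succ_castSucc, Fin.snoc_castSucc]
    · rw [Fin.contractNth_apply_of_gt _ _ _ _ (by simpa using h),
        Fin.contractNth_apply_of_gt _ _ _ _ h, Fin.succ_castSucc, Fin.snoc_castSucc]

lemma aux_contractNth_castSucc_last_snoc (op : β → β → β) (g : Fin (n + 1) → β) (s : β) :
    Fin.contractNth (Fin.castSucc (Fin.last n)) op (Fin.snoc g s)
      = Fin.snoc (fun k : Fin n => g k.castSucc) (op (g (Fin.last n)) s) := by
  funext k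
  refine Fin.lastCases ?_ (fun k' => ?_) k
  · rw [Fin.snoc_last, Fin.contractNth_apply_of_eq _ _ _ _ (by simp),
      Fin.snoc_castSucc, Fin.succ_last, Fin.snoc_last]
  · rw [Fin.snoc_castSucc, Fin.contractNth_apply_of_lt _ _ _ _ (by simpa using k'.isLt),
      Fin.snoc_castSucc]

lemma aux_contractNth_last_snoc (op : β → β → β) (g : Fin (n + 1) → β) (s : β) :
    Fin.contractNth (Fin.last (n + 1)) op (Fin.snoc g s) = g := by
  funext k
  rw [Fin.contractNth_apply_of_lt _ _ _ _ (by simpa using k.isLt), Fin.snoc_castSucc]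

variable {M : Type*} [Monoid M]

lemma aux_prod_ofFn_succ (g : Fin (n + 1) → M) :
    (List.ofFn g).prod = g 0 * (List.ofFn fun k : Fin n => g k.succ).prod := by
  rw [List.ofFn_succ, List.prod_cons]

lemma aux_prod_ofFn_castSucc (g : Fin (n + 1) → M) :
    (List.ofFn g).prod = (List.ofFn fun k : Fin n => g k.castSucc).prod * g (Fin.last n) := by
  rw [List.ofFn_succ', List.concat_eq_append, List.prod_append, List.prod_cons, List.prod_nil,
    mul_one]

lemma aux_prod_contractNth (j : Fin (n + 1)) (hj : (j : ℕ) < n) (g : Fin (n + 1) → M) :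
    (List.ofFn (Fin.contractNth j (· * ·) g)).prod = (List.ofFn g).prod := by
  induction n with
  | zero => omega
  | succ n ih =>
    rcases Fin.eq_zero_or_eq_succ j with rfl | ⟨j', rfl⟩
    · rw [aux_prod_ofFn_succ (Fin.contractNth 0 (· * ·) g), aux_prod_ofFn_succ g,
        aux_prod_ofFn_succ (fun k : Fin (n + 1) => g k.succ)]
      have h0 : Fin.contractNth (0 : Fin (n + 2)) (· * ·) g 0 = g 0 * g 1 := by
        rw [Fin.contractNth_apply_of_eq _ _ _ _ (by simp)]
        rfl
      have h1 : (fun k : Fin n => Fin.contractNth (0 : Fin (n + 2)) (· * ·) g k.succ)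
          = fun k : Fin n => g k.succ.succ := by
        funext k
        rw [Fin.contractNth_apply_of_gt _ _ _ _ (by simp)]
      rw [h0, h1, mul_assoc]
      rfl
    · rw [aux_prod_ofFn_succ (Fin.contractNth j'.succ (· * ·) g), aux_prod_ofFn_succ g]
      have h0 : Fin.contractNth j'.succ (· * ·) g 0 = g 0 := by
        rw [Fin.contractNth_apply_of_lt _ _ _ _ (by simp)]
        rfl
      rw [h0, aux_contractNth_succ_comp, ih j' (by simpa using hj)]

end AuxFin

variable {N : Type*} [Group N] [Fintype N] {B : Type*} [CommRing B] [MulSemiringAction N B]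

lemma aux_smul_zsmul (n : N) (z : ℤ) (x : B) : n • (z • x) = z • (n • x) :=
  map_zsmul (DistribMulAction.toAddMonoidHom B n) z x

lemma aux_smul_sum {ι : Type*} (n : N) (u : Finset ι) (F : ι → B) :
    n • ∑ x ∈ u, F x = ∑ x ∈ u, n • F x :=
  map_sum (DistribMulAction.toAddMonoidHom B n) F u

/-- The differential of the complex of inhomogeneous cochains of the finite group `N` with
coefficients in `B`, computing the group cohomology `H^*(N, B)`. -/
noncomputable def cochainD (n : ℕ) (f : (Fin n → N) → B) : (Fin (n + 1) → N) → B :=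
  fun g =>
    g 0 • f (fun i => g i.succ) +
      ∑ j : Fin (n + 1), ((-1 : ℤ) ^ ((j : ℕ) + 1)) • f (Fin.contractNth j (· * ·) g)

/-- Let `N` be a finite group acting on an algebra `B` with invariants
`A' = Bᴺ`, and suppose `t = ϖ^ε` is an invariant element lying in the image of the trace
map `Tr(b) = ∑_{n ∈ N} n(b)`, say `Tr(α) = t`.  Then: (1) the map `h : x ↦ ∑_g x·g(α)`
composed with the trace equals multiplication by `t` on `A'` (i.e. `Tr(x·α) = x·t` for
invariant `x`, exhibiting `A'` as almost projective over the group algebra); consequently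
(2) multiplication by `t` kills all higher cohomology `Hⁱ(N, B)`, `i > 0`: every `i`-cocycle
multiplied by `t` is a coboundary. -/
theorem stmt_14 (t : B) (ht : ∀ n : N, n • t = t)
    (α : B) (hα : ∑ n : N, n • α = t) :
    -- (1) `Tr(x · α) = x · t` for every invariant `x`
    (∀ x : B, (∀ n : N, n • x = x) → ∑ n : N, n • (x * α) = x * t) ∧
    -- (2) `t · Hⁱ(N, B) = 0` for all `i > 0`
    (∀ (i : ℕ) (f : (Fin (i + 1) → N) → B), cochainD (i + 1) f = 0 →
      ∃ u : (Fin i → N) → B, cochainD i u = fun g => t * f g) := by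
  constructor
  · intro x hx
    calc ∑ n : N, n • (x * α) = ∑ n : N, x * n • α := by
          refine Finset.sum_congr rfl fun n _ => ?_
          rw [smul_mul', hx n]
      _ = x * ∑ n : N, n • α := by rw [Finset.mul_sum]
      _ = x * t := by rw [hα]
  · intro i f hf
    refine ⟨fun v => (-1 : ℤ) ^ (i + 1) •
      ∑ s : N, ((List.ofFn v).prod * s) • α * f (Fin.snoc v s), ?_⟩
    funext g
    have hD : ∀ s : N, cochainD (i + 1) f (Fin.snoc g s) = 0 := fun s => congrFun hf _
    -- the per-`s` cocycle identity, in expanded form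
    have key : ∀ s : N,
        g 0 • f (Fin.snoc (fun k : Fin i => g k.succ) s)
          + ((∑ j : Fin i, ((-1 : ℤ) ^ ((j : ℕ) + 1)) •
                f (Fin.snoc (Fin.contractNth (Fin.castSucc j) (· * ·) g) s)
              + ((-1 : ℤ) ^ (i + 1)) •
                f (Fin.snoc (fun k : Fin i => g k.castSucc) (g (Fin.last i) * s)))
            + ((-1 : ℤ) ^ (i + 2)) • f g) = 0 := by
      intro s
      have h0 := hD s
      rw [cochainD, Fin.sum_univ_castSucc (n := i + 1), Fin.sum_univ_castSucc (n := i)] at h0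
      rw [aux_snoc_zero, aux_snoc_comp_succ, aux_contractNth_last_snoc,
        aux_contractNth_castSucc_last_snoc] at h0
      simp only [Fin.coe_castSucc, Fin.val_last] at h0
      have hcc : ∀ j : Fin i,
          Fin.contractNth (Fin.castSucc (Fin.castSucc j)) (· * ·) (Fin.snoc g s)
            = Fin.snoc (Fin.contractNth (Fin.castSucc j) (· * ·) g) s := fun j =>
        aux_contractNth_castSucc_snoc _ (Fin.castSucc j) (by simpa using j.isLt) g s
      simp only [hcc] at h0
      convert h0 using 2
    -- the trace identity
    have hP : ∑ s : N, ((List.ofFn g).prod * s) • α = t := by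
      rw [← hα]
      exact Fintype.sum_equiv (Equiv.mulLeft (List.ofFn g).prod)
        (fun s => ((List.ofFn g).prod * s) • α) (fun s => s • α) fun s => rfl
    show (g 0 • ((-1 : ℤ) ^ (i + 1) •
        ∑ s : N, ((List.ofFn fun k : Fin i => g k.succ).prod * s) • α *
          f (Fin.snoc (fun k : Fin i => g k.succ) s)))
      + ∑ j : Fin (i + 1), ((-1 : ℤ) ^ ((j : ℕ) + 1)) • ((-1 : ℤ) ^ (i + 1) •
          ∑ s : N, ((List.ofFn (Fin.contractNth j (· * ·) g)).prod * s) • α *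
            f (Fin.snoc (Fin.contractNth j (· * ·) g) s))
      = t * f g
    -- rewrite the first term
    have hA : (g 0 • ((-1 : ℤ) ^ (i + 1) •
        ∑ s : N, ((List.ofFn fun k : Fin i => g k.succ).prod * s) • α *
          f (Fin.snoc (fun k : Fin i => g k.succ) s)))
        = ∑ s : N, (-1 : ℤ) ^ (i + 1) • (((List.ofFn g).prod * s) • α *
            (g 0 • f (Fin.snoc (fun k : Fin i => g k.succ) s))) := by
      rw [aux_smul_zsmul, aux_smul_sum, Finset.smul_sum]
      refine Finset.sum_congr rfl fun s _ => ?_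
      congr 1
      rw [smul_mul', ← mul_smul, ← mul_assoc, ← aux_prod_ofFn_succ]
    rw [hA, Fin.sum_univ_castSucc (n := i)]
    -- rewrite the middle terms (j < i)
    have hC1 : ∀ j : Fin i,
        ((-1 : ℤ) ^ (((Fin.castSucc j : Fin (i + 1)) : ℕ) + 1)) • ((-1 : ℤ) ^ (i + 1) •
          ∑ s : N, ((List.ofFn (Fin.contractNth (Fin.castSucc j) (· * ·) g)).prod * s) • α *
            f (Fin.snoc (Fin.contractNth (Fin.castSucc j) (· * ·) g) s))
        = ∑ s : N, (-1 : ℤ) ^ (i + 1) • (((List.ofFn g).prod * s) • α *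
            (((-1 : ℤ) ^ ((j : ℕ) + 1)) •
              f (Fin.snoc (Fin.contractNth (Fin.castSucc j) (· * ·) g) s))) := by
      intro j
      rw [aux_prod_contractNth (Fin.castSucc j) (by simpa using j.isLt) g]
      rw [smul_smul, mul_comm, ← smul_smul, Finset.smul_sum, Finset.smul_sum]
      refine Finset.sum_congr rfl fun s _ => ?_
      simp only [Fin.coe_castSucc]
      congr 1
      rw [mul_smul_comm]
    simp only [hC1]
    -- rewrite the last term (j = last)
    have hC2 : ((-1 : ℤ) ^ (((Fin.last i : Fin (i + 1)) : ℕ) + 1)) • ((-1 : ℤ) ^ (i + 1) •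
          ∑ s : N, ((List.ofFn (Fin.contractNth (Fin.last i) (· * ·) g)).prod * s) • α *
            f (Fin.snoc (Fin.contractNth (Fin.last i) (· * ·) g) s))
        = ∑ s : N, ((List.ofFn g).prod * s) • α *
            f (Fin.snoc (fun k : Fin i => g k.castSucc) (g (Fin.last i) * s)) := by
      rw [aux_contractNth_last, Fin.val_last, smul_smul, ← pow_add]
      have : ((-1 : ℤ) ^ (i + 1 + (i + 1))) = 1 := Even.neg_one_pow ⟨i + 1, by ring⟩
      rw [this, one_smul]
      refine (Fintype.sum_equiv (Equiv.mulLeft (g (Fin.last i))) _ _ fun s => ?_).symm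
      simp only [Equiv.coe_mulLeft]
      congr 2
      rw [aux_prod_ofFn_castSucc g, mul_assoc]
    rw [hC2, Finset.sum_comm, ← Finset.sum_add_distrib, ← Finset.sum_add_distrib,
      ← hP, Finset.sum_mul]
    refine Finset.sum_congr rfl fun s _ => ?_
    rw [← Finset.smul_sum, ← Finset.mul_sum]
    have hkey := key s
    have h2 : ((-1 : ℤ)) ^ (i + 2) = -((-1 : ℤ)) ^ (i + 1) := by
      rw [show i + 2 = (i + 1) + 1 from rfl, pow_succ]; ring
    rw [h2, neg_smul] at hkey
    simp only [zsmul_eq_mul, Int.cast_pow, Int.cast_neg, Int.cast_one] at hkey ⊢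
    have hcsq : ((-1 : B)) ^ (i + 1) * ((-1 : B)) ^ (i + 1) = 1 := by
      rw [← pow_add]; exact Even.neg_one_pow ⟨i + 1, by ring⟩
    set w := ((List.ofFn g).prod * s) • α with hw
    set a := g 0 • f (Fin.snoc (fun k => g k.succ) s) with ha
    set S := ∑ j : Fin i, ((-1 : B)) ^ ((j : ℕ) + 1) *
      f (Fin.snoc (Fin.contractNth (Fin.castSucc j) (· * ·) g) s) with hS
    set b := f (Fin.snoc (fun k => g k.castSucc) (g (Fin.last i) * s)) with hb
    set F := f g with hF
    generalize hc : ((-1 : B)) ^ (i + 1) = c at hkey hcsq ⊢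
    linear_combination (c * w) * hkey + (w * F - w * b) * hcsq
end

section
/- Let $X$ be a module with an automorphism $\gamma$ such that $\gamma - 1$ is invertible on $X$ with $\|(\gamma-1)^{-1}\| \leq C$ (for a submultiplicative norm on operators), and let $B \in X$ satisfy $\gamma(B) - B = (V_1 - 1)B + B(V_2 - 1) - (V_1-1)B(V_2-1)$ for operators $V_1, V_2$ with $\|V_i - 1\| \leq \delta$ where $C \cdot \delta < 1$. If additionally $\gamma(B) = V_1 B V_2$, then $B = 0$. (Successive approximation: $B \in \varpi^r X^+$ implies $\gamma(B) - B \in \varpi^{r} \delta X^+$, and applying $(\gamma-1)^{-1}$ gives $B \in \varpi^{r} C\delta X^+$; iterating forces $B = 0$ since $X$ is separated.) -/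
/-- successive approximation: Let `X` be a complete separated nonarchimedean
normed ring, `γ` an (additive) operator on `X` such that `γ - 1` is invertible with
`‖(γ-1)⁻¹‖ ≤ C` (witnessed by a two-sided inverse `g`), and let `V₁, V₂ ∈ X` with
`‖Vᵢ - 1‖ ≤ δ ≤ 1` where `C·δ < 1`.  If `B ∈ X` satisfies `γ(B) = V₁ B V₂` — equivalently
`γ(B) - B = (V₁-1)B + B(V₂-1) + (V₁-1)B(V₂-1)` — then `B = 0`: indeed `‖γ(B)-B‖ ≤ δ‖B‖`,
and applying `(γ-1)⁻¹` gives `‖B‖ ≤ Cδ‖B‖`, which forces `B = 0` since `Cδ < 1` and `X`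
is separated. -/
theorem stmt_15 {X : Type*} [NormedRing X] [NormOneClass X] [IsUltrametricDist X]
    [CompleteSpace X]
    (γ : X → X) (hγadd : ∀ x y : X, γ (x + y) = γ x + γ y)
    (C δ : ℝ) (hδ0 : 0 ≤ δ) (hδ1 : δ ≤ 1) (hCδ : C * δ < 1)
    (g : X → X)
    (hg₁ : ∀ x : X, γ (g x) - g x = x)
    (hg₂ : ∀ x : X, g (γ x - x) = x)
    (hgbound : ∀ x : X, ‖g x‖ ≤ C * ‖x‖)
    (V₁ V₂ : X) (hV₁ : ‖V₁ - 1‖ ≤ δ) (hV₂ : ‖V₂ - 1‖ ≤ δ)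
    (B : X) (hB : γ B = V₁ * B * V₂) :
    B = 0 := by
  -- ‖V₂‖ ≤ 1 by ultrametric inequality
  have hV2le : ‖V₂‖ ≤ 1 := by
    have := IsUltrametricDist.norm_add_le_max (V₂ - 1) 1
    simpa using this.trans (by simpa using max_le (hV₂.trans hδ1) le_rfl)
  -- decompose γ B - B
  have hdec : γ B - B = (V₁ - 1) * B * V₂ + B * (V₂ - 1) := by
    rw [hB]; noncomm_ring
  have h1 : ‖(V₁ - 1) * B * V₂‖ ≤ δ * ‖B‖ := by
    calc ‖(V₁ - 1) * B * V₂‖ ≤ ‖(V₁ - 1) * B‖ * ‖V₂‖ := norm_mul_le _ _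
      _ ≤ ‖V₁ - 1‖ * ‖B‖ * 1 := by
          apply mul_le_mul (norm_mul_le _ _) hV2le (norm_nonneg _)
          positivity
      _ ≤ δ * ‖B‖ * 1 := by
          gcongr
      _ = δ * ‖B‖ := by ring
  have h2 : ‖B * (V₂ - 1)‖ ≤ δ * ‖B‖ := by
    calc ‖B * (V₂ - 1)‖ ≤ ‖B‖ * ‖V₂ - 1‖ := norm_mul_le _ _
      _ ≤ ‖B‖ * δ := by gcongr
      _ = δ * ‖B‖ := mul_comm _ _
  have hdiff : ‖γ B - B‖ ≤ δ * ‖B‖ := by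
    rw [hdec]
    exact (IsUltrametricDist.norm_add_le_max _ _).trans (max_le h1 h2)
  have hgb : ‖B‖ ≤ C * ‖γ B - B‖ := by
    have := hgbound (γ B - B)
    rwa [hg₂ B] at this
  have hB0 : ‖B‖ = 0 := by
    rcases le_or_gt 0 C with hC | hC
    · have h3 : ‖B‖ ≤ C * (δ * ‖B‖) :=
        hgb.trans (mul_le_mul_of_nonneg_left hdiff hC)
      nlinarith [norm_nonneg B]
    · have h3 : C * ‖γ B - B‖ ≤ 0 :=
        mul_nonpos_of_nonpos_of_nonneg hC.le (norm_nonneg _)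
      linarith [norm_nonneg B]
  exact norm_eq_zero.mp hB0
end

section
/- Let $A$ be a $p$-adically complete flat $\mathbb{Z}_p$-algebra and let $\gamma$ be a continuous automorphism of $A$. Suppose $A = A_0 \oplus X$ is a $\gamma$-stable topological direct sum decomposition such that $\gamma = \mathrm{id}$ on $A_0$ and $\gamma - 1$ is invertible on $X$ with $(\gamma-1)^{-1}(X \cap A) \subseteq p^{-c} (X \cap A)$ for some constant $c \geq 0$. Then the continuous cohomology $H^i(\mathbb{Z}_p, A)$ (for the action via $\gamma$) satisfies: $H^0 = A_0$, $H^1 \cong A_0$ (via the class of the cocycle determined by its value on $\gamma$, modulo the image of $\gamma - 1$), and $H^i = 0$ for $i \geq 2$; i.e., the inclusion $(A_0 \xrightarrow{0} A_0) \hookrightarrow (A \xrightarrow{\gamma-1} A)$ of two-term complexes is a quasi-isomorphism. -/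
/-- Let `A` be a `p`-adically complete flat `ℤ_p`-algebra and `γ` a continuous
(`ℤ_p`-linear, hence `p`-adically continuous) automorphism of `A`.  Suppose `A = A₀ ⊕ X` is
a `γ`-stable direct sum decomposition with `γ = id` on `A₀`, and `γ - 1` invertible on `X`
with `(γ-1)⁻¹(X ∩ A) ⊆ p^{-c}(X ∩ A)` for some constant `c ≥ 0` (boundedness of the
inverse).  Then the continuous cohomology `Hⁱ(ℤ_p, A)` — computed by the two-term complex
`A → A`, `a ↦ γ(a) - a` — satisfies `H⁰ = A₀`, `H¹ ≅ A₀` (via the value of a cocycle on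
`γ`, modulo the image of `γ - 1`), and `Hⁱ = 0` for `i ≥ 2`; i.e. the inclusion
`(A₀ → A₀, 0) ↪ (A → A, γ - 1)` of two-term complexes is a quasi-isomorphism. -/
theorem stmt_18 {p : ℕ} [Fact p.Prime]
    (A : Type*) [CommRing A] [Algebra ℤ_[p] A] [Module.Flat ℤ_[p] A]
    [IsAdicComplete (Ideal.span {(p : A)}) A]
    (γ : A ≃ₗ[ℤ_[p]] A)
    (A0 X : Submodule ℤ_[p] A) (hcompl : IsCompl A0 X)
    (hA0 : ∀ a ∈ A0, γ a = a)
    (hXstab : ∀ x ∈ X, γ x ∈ X)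
    -- `γ - 1` is invertible on `X` …
    (hsurj : ∀ y ∈ X, ∃ x ∈ X, γ x - x = y)
    (hinj : ∀ x ∈ X, γ x = x → x = 0)
    -- … with inverse bounded by `p^{-c}`: `(γ-1)⁻¹(X ∩ pⁿA) ⊆ p^{n-c}A`
    (c : ℕ)
    (hbound : ∀ n : ℕ, c ≤ n → ∀ y ∈ X, y ∈ Ideal.span {(p : A) ^ n} →
      ∀ x ∈ X, γ x - x = y → x ∈ Ideal.span {(p : A) ^ (n - c)}) :
    -- `H⁰ = ker(γ - 1) = A₀`
    (∀ a : A, γ a = a ↔ a ∈ A0) ∧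
    -- `H¹ = coker(γ - 1) ≅ A₀`: `A₀ → A/(γ-1)A` is surjective …
    (∀ a : A, ∃ b ∈ A0, ∃ x : A, a - b = γ x - x) ∧
    -- … and injective
    (∀ b ∈ A0, (∃ x : A, b = γ x - x) → b = 0) ∧
    -- `Hⁱ = 0` for `i ≥ 2`, automatically: the complex is concentrated in degrees `0, 1`
    True := by
  constructor
  · intro a
    constructor
    · intro h
      obtain ⟨b, x, hb, hx, rfl⟩ := Submodule.codisjoint_iff_exists_add_eq.mp hcompl.codisjoint a
      have : γ x = x := by
        have := h; rw [map_add, hA0 b hb] at this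
        have := add_left_cancel this; exact this
      rw [hinj x hx this, add_zero]; exact hb
    · exact hA0 a
  refine ⟨?_, ?_, trivial⟩
  · intro a
    obtain ⟨b, x, hb, hx, rfl⟩ := Submodule.codisjoint_iff_exists_add_eq.mp hcompl.codisjoint a
    obtain ⟨z, hz, hz'⟩ := hsurj x hx
    exact ⟨b, hb, z, by rw [hz']; ring⟩
  · rintro b hb ⟨x, rfl⟩
    obtain ⟨b0, x1, hb0, hx1, rfl⟩ := Submodule.codisjoint_iff_exists_add_eq.mp hcompl.codisjoint x
    have hX : γ (b0 + x1) - (b0 + x1) ∈ X := by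
      rw [map_add, hA0 b0 hb0, add_sub_add_left_eq_sub]
      exact X.sub_mem (hXstab x1 hx1) hx1
    have := hcompl.disjoint.le_bot ⟨hb, hX⟩
    simpa using this
end
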